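/- Let W ∈ ℝ^N, n ≥ 1, and k₀, …, k_{n−1} ∈ ℕ with k₀ + ⋯ + k_{n−1} ≤ N and k₀ + ⋯ + k_{n−1} ≥ 1. Set U := Σ_{t=0}^{n−1} 2^{−t} ‖W_{[k_t]}‖₁ and V := Σ_{t=0}^{n−1} k_t 2^{−2t}. Suppose Q ∈ ℝ^N has, for each t = 0, …, n−1, exactly k_t entries equal to +2^{−t} or −2^{−t}, and all remaining entries equal to 0. Then for every integer s ∈ ℤ, ‖2^s Q − W‖² ≥ V·(2^s − U/V)² − U²/V + ‖W‖² = 2^{2s} V − 2^{s+1} U + ‖W‖². -/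

import Mathlib

/-!
Expanding the square, `‖2^s Q - W‖² = 2^(2s) ‖Q‖² - 2^(s+1) ⟪Q, W⟫ + ‖W‖²`, and counting
entries gives `‖Q‖² = V`; it remains to show `⟪Q, W⟫ ≤ U`. The entries of `Q` of magnitude
`2^(-t)` with `t < u` sit at `k 0 + ⋯ + k (u-1)` positions, so the corresponding `|W i|` sum
to at most the sum of that many largest `|W i|`. Abel summation against the decreasing
weights `2^(-t)` turns these prefix bounds into `∑ |Q i| |W i| ≤ ∑ 2^(-t) ‖W_{[k_t]}‖₁ = U`.
-/

/-- `groupAbsSum W σ a b` is the ℓ¹ norm of the part of `W` whose magnitude-ranks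
(with respect to the sorting permutation `σ`) lie in `[a, b)`; when `σ` sorts the
entries of `W` in decreasing order of magnitude, `groupAbsSum W σ (P t) (P t + k t)`
equals `‖W_{[k_t]}‖₁` where `P t = k 0 + ⋯ + k (t-1)`. -/
noncomputable def groupAbsSum {N : ℕ} (W : Fin N → ℝ) (σ : Equiv.Perm (Fin N))
    (a b : ℕ) : ℝ :=
  ∑ r ∈ Finset.univ.filter (fun r : Fin N => a ≤ (r : ℕ) ∧ (r : ℕ) < b), |W (σ r)|

/-- `prefSum k t = k 0 + k 1 + ⋯ + k (t − 1)`. -/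
def prefSum (k : ℕ → ℕ) (t : ℕ) : ℕ := ∑ j ∈ Finset.range t, k j

open Finset

theorem Fin.val_le_of_strictMono {m N : ℕ} {f : Fin m → Fin N} (hf : StrictMono f) (i : Fin m) :
    (i : ℕ) ≤ f i := by
  obtain ⟨i, hi⟩ := i
  induction i with
  | zero => exact Nat.zero_le _
  | succ i ih =>
    have hlt : f ⟨i, by omega⟩ < f ⟨i + 1, hi⟩ := hf (Fin.mk_lt_mk.2 i.lt_succ_self)
    exact Nat.succ_le_of_lt ((ih (by omega)).trans_lt hlt)

theorem Finset.sum_le_sum_val_lt_card {M : Type*} [AddCommMonoid M] [PartialOrder M]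
    [IsOrderedAddMonoid M] {N : ℕ} {w : Fin N → M} (hw : Antitone w) (D : Finset (Fin N)) :
    ∑ r ∈ D, w r ≤ ∑ r ∈ univ.filter (fun r : Fin N => (r : ℕ) < #D), w r := by
  have hcard : #D ≤ N := by simpa using D.card_le_univ
  have hfirst : univ.filter (fun r : Fin N => (r : ℕ) < #D) = univ.map (Fin.castLEEmb hcard) := by
    ext r
    simp only [mem_filter, mem_univ, true_and, mem_map, Fin.castLEEmb_apply]
    exact ⟨fun hr => ⟨⟨r, hr⟩, rfl⟩, by rintro ⟨j, rfl⟩; exact j.2⟩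
  conv_lhs => rw [← D.map_orderEmbOfFin_univ rfl]
  rw [hfirst, sum_map, sum_map]
  exact sum_le_sum fun j _ => hw (Fin.val_le_of_strictMono (D.orderEmbOfFin rfl).strictMono j)

theorem Finset.sum_range_mul_le_sum_range_mul {n : ℕ} {c a b : ℕ → ℝ} (hc0 : ∀ t, 0 ≤ c t)
    (hc : Antitone c) (hab : ∀ u ≤ n, ∑ t ∈ range u, a t ≤ ∑ t ∈ range u, b t) :
    ∑ t ∈ range n, c t * a t ≤ ∑ t ∈ range n, c t * b t := by
  have hd : ∀ u ≤ n, 0 ≤ ∑ t ∈ range u, (b t - a t) := fun u hu => by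
    rw [sum_sub_distrib]; exact sub_nonneg.2 (hab u hu)
  rw [← sub_nonneg, ← sum_sub_distrib]
  have hparts := sum_range_by_parts c (fun t => b t - a t) n
  simp only [smul_eq_mul] at hparts
  simp only [← mul_sub, hparts]
  refine sub_nonneg.2 ((sum_nonpos fun i hi => ?_).trans (mul_nonneg (hc0 _) (hd n le_rfl)))
  exact mul_nonpos_of_nonpos_of_nonneg (sub_nonpos.2 (hc i.le_succ))
    (hd _ (by simp at hi; omega))

section groupAbsSum

variable {N : ℕ} (W : Fin N → ℝ) (σ : Equiv.Perm (Fin N))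

theorem groupAbsSum_add_groupAbsSum {a b c : ℕ} (hab : a ≤ b) (hbc : b ≤ c) :
    groupAbsSum W σ a b + groupAbsSum W σ b c = groupAbsSum W σ a c := by
  unfold groupAbsSum
  rw [← sum_union (disjoint_filter.2 fun r _ h h' => by omega)]
  congr 1
  ext r
  simp only [mem_union, mem_filter, mem_univ, true_and]
  omega

theorem sum_groupAbsSum_prefSum (k : ℕ → ℕ) (u : ℕ) :
    ∑ t ∈ range u, groupAbsSum W σ (prefSum k t) (prefSum k t + k t)
      = groupAbsSum W σ 0 (prefSum k u) := by
  induction u with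
  | zero => simp [groupAbsSum, prefSum]
  | succ u ih =>
    rw [sum_range_succ, ih, groupAbsSum_add_groupAbsSum W σ (Nat.zero_le _) le_self_add]
    simp [prefSum, sum_range_succ]

theorem sum_abs_le_groupAbsSum_card (hσ : Antitone fun r => |W (σ r)|) (D : Finset (Fin N)) :
    ∑ i ∈ D, |W i| ≤ groupAbsSum W σ 0 #D := calc
  ∑ i ∈ D, |W i| = ∑ r ∈ D.map σ.symm.toEmbedding, |W (σ r)| := by simp [sum_map]
  _ ≤ ∑ r ∈ univ.filter (fun r : Fin N => (r : ℕ) < #(D.map σ.symm.toEmbedding)), |W (σ r)| :=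
      sum_le_sum_val_lt_card hσ _
  _ = groupAbsSum W σ 0 #D := by simp [groupAbsSum]

end groupAbsSum

noncomputable def levelSet {ι : Type*} [Fintype ι] (Q : ι → ℝ) (c : ℝ) : Finset ι :=
  univ.filter fun i => Q i = c ∨ Q i = -c

section levelSet

variable {ι : Type*} [Fintype ι] {Q : ι → ℝ}

theorem abs_eq_of_mem_levelSet {c : ℝ} (hc : 0 ≤ c) {i : ι} (hi : i ∈ levelSet Q c) :
    |Q i| = c :=
  (abs_eq hc).2 (mem_filter.1 hi).2

variable {n : ℕ} {c : ℕ → ℝ} (hc0 : ∀ t, 0 ≤ c t) (hc : Function.Injective c)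
  (hQ : ∀ i, Q i ≠ 0 → ∃ t < n, Q i = c t ∨ Q i = -c t)
include hc0 hc

theorem pairwiseDisjoint_levelSet (s : Set ℕ) :
    s.PairwiseDisjoint fun t => levelSet Q (c t) := fun t _ t' _ htt' =>
  disjoint_left.2 fun _ hi hi' => htt' <| hc <|
    (abs_eq_of_mem_levelSet (hc0 t) hi).symm.trans (abs_eq_of_mem_levelSet (hc0 t') hi')

include hQ

theorem sum_eq_sum_sum_levelSet {M : Type*} [AddCommMonoid M] (F : ι → M)
    (hF : ∀ i, Q i = 0 → F i = 0) :
    ∑ i, F i = ∑ t ∈ range n, ∑ i ∈ levelSet Q (c t), F i := by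
  classical
  rw [← sum_biUnion (pairwiseDisjoint_levelSet hc0 hc _)]
  refine (sum_subset (subset_univ _) fun i _ hi => hF i ?_).symm
  by_contra hQi
  obtain ⟨t, ht, hit⟩ := hQ i hQi
  exact hi (mem_biUnion.2 ⟨t, mem_range.2 ht, mem_filter.2 ⟨mem_univ i, hit⟩⟩)

theorem sum_sq_eq_sum_card_levelSet :
    ∑ i, Q i ^ 2 = ∑ t ∈ range n, #(levelSet Q (c t)) * c t ^ 2 := by
  rw [sum_eq_sum_sum_levelSet hc0 hc hQ _ fun i h => by simp [h]]
  refine sum_congr rfl fun t _ => ?_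
  rw [sum_congr rfl fun i hi => by rw [← sq_abs, abs_eq_of_mem_levelSet (hc0 t) hi], sum_const,
    nsmul_eq_mul]

theorem sum_abs_mul_eq_sum_levelSet (W : ι → ℝ) :
    ∑ i, |Q i| * |W i| = ∑ t ∈ range n, c t * ∑ i ∈ levelSet Q (c t), |W i| := by
  rw [sum_eq_sum_sum_levelSet hc0 hc hQ _ fun i h => by simp [h]]
  refine sum_congr rfl fun t _ => ?_
  rw [mul_sum]
  exact sum_congr rfl fun i hi => by rw [abs_eq_of_mem_levelSet (hc0 t) hi]

end levelSet

section quantization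

variable {N n : ℕ} {W Q : Fin N → ℝ} {σ : Equiv.Perm (Fin N)} {c : ℕ → ℝ} {k : ℕ → ℕ}
  (hσ : Antitone fun r => |W (σ r)|) (hc0 : ∀ t, 0 ≤ c t) (hc : Function.Injective c)
  (hQ : ∀ i, Q i ≠ 0 → ∃ t < n, Q i = c t ∨ Q i = -c t)
  (hk : ∀ t < n, #(levelSet Q (c t)) = k t)
include hσ hc0 hc hk

theorem sum_sum_levelSet_le_sum_groupAbsSum {u : ℕ} (hu : u ≤ n) :
    ∑ t ∈ range u, ∑ i ∈ levelSet Q (c t), |W i|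
      ≤ ∑ t ∈ range u, groupAbsSum W σ (prefSum k t) (prefSum k t + k t) := by
  have hdisj := pairwiseDisjoint_levelSet (Q := Q) hc0 hc (range u)
  have hcard : #((range u).biUnion fun t => levelSet Q (c t)) = prefSum k u := by
    rw [card_biUnion hdisj]
    exact sum_congr rfl fun t ht => hk t ((mem_range.1 ht).trans_le hu)
  rw [← sum_biUnion hdisj, sum_groupAbsSum_prefSum, ← hcard]
  exact sum_abs_le_groupAbsSum_card W σ hσ _

include hQ

theorem sum_mul_le_sum_mul_groupAbsSum (hc_anti : Antitone c) :
    ∑ i, Q i * W i ≤ ∑ t ∈ range n, c t * groupAbsSum W σ (prefSum k t) (prefSum k t + k t) :=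
  calc ∑ i, Q i * W i ≤ ∑ i, |Q i| * |W i| :=
        sum_le_sum fun _ _ => (le_abs_self _).trans (abs_mul _ _).le
    _ = ∑ t ∈ range n, c t * ∑ i ∈ levelSet Q (c t), |W i| :=
        sum_abs_mul_eq_sum_levelSet hc0 hc hQ W
    _ ≤ _ := sum_range_mul_le_sum_range_mul hc0 hc_anti fun _ hu =>
        sum_sum_levelSet_le_sum_groupAbsSum hσ hc0 hc hk hu

end quantization

theorem le_sum_mul_sub_sq {ι : Type*} [Fintype ι] (Q W : ι → ℝ) {a U : ℝ} (ha : 0 ≤ a)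
    (hQW : ∑ i, Q i * W i ≤ U) :
    a ^ 2 * ∑ i, Q i ^ 2 - 2 * a * U + ∑ i, W i ^ 2 ≤ ∑ i, (a * Q i - W i) ^ 2 := by
  have hexpand : ∑ i, (a * Q i - W i) ^ 2
      = a ^ 2 * ∑ i, Q i ^ 2 - 2 * a * ∑ i, Q i * W i + ∑ i, W i ^ 2 := by
    simp only [mul_sum, ← sum_sub_distrib, ← sum_add_distrib]
    exact sum_congr rfl fun i _ => by ring
  rw [hexpand]
  nlinarith [mul_le_mul_of_nonneg_left hQW ha]

theorem quantization_error_lower_bound_general {N n : ℕ} (W : Fin N → ℝ)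
    (k : ℕ → ℕ)
    (hpos : 1 ≤ ∑ t ∈ Finset.range n, k t)
    (σ : Equiv.Perm (Fin N))
    (hσ : ∀ i j : Fin N, i ≤ j → |W (σ j)| ≤ |W (σ i)|)
    (Q : Fin N → ℝ)
    (hcount : ∀ t < n, (Finset.univ.filter
        (fun i : Fin N => Q i = (2 : ℝ) ^ (-(t : ℤ)) ∨ Q i = -(2 : ℝ) ^ (-(t : ℤ)))).card = k t)
    (hrest : ∀ i : Fin N, Q i ≠ 0 →
        ∃ t < n, Q i = (2 : ℝ) ^ (-(t : ℤ)) ∨ Q i = -(2 : ℝ) ^ (-(t : ℤ)))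
    (U V : ℝ)
    (hU : U = ∑ t ∈ Finset.range n, (2 : ℝ) ^ (-(t : ℤ)) *
        groupAbsSum W σ (prefSum k t) (prefSum k t + k t))
    (hV : V = ∑ t ∈ Finset.range n, (k t : ℝ) * (2 : ℝ) ^ (-(2 * (t : ℤ))))
    (s : ℤ) :
    V * ((2 : ℝ) ^ s - U / V) ^ 2 - U ^ 2 / V + ∑ i, (W i) ^ 2
        ≤ ∑ i, ((2 : ℝ) ^ s * Q i - W i) ^ 2 ∧
      V * ((2 : ℝ) ^ s - U / V) ^ 2 - U ^ 2 / V + ∑ i, (W i) ^ 2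
        = (2 : ℝ) ^ (2 * s) * V - (2 : ℝ) ^ (s + 1) * U + ∑ i, (W i) ^ 2 := by
  set c : ℕ → ℝ := fun t => 2 ^ (-(t : ℤ))
  have hc_anti : StrictAnti c := (zpow_right_strictMono₀ one_lt_two).comp_strictAnti
    fun _ _ h => neg_lt_neg (Int.ofNat_lt.2 h)
  have hc0 : ∀ t, 0 ≤ c t := fun t => by positivity
  have hQV : ∑ i, Q i ^ 2 = V := by
    rw [sum_sq_eq_sum_card_levelSet hc0 hc_anti.injective hrest, hV]
    refine sum_congr rfl fun t ht => ?_
    rw [show #(levelSet Q (c t)) = k t from hcount t (mem_range.1 ht), ← zpow_natCast, ← zpow_mul]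
    ring_nf
  have hQW : ∑ i, Q i * W i ≤ U := hU ▸ sum_mul_le_sum_mul_groupAbsSum (fun _ _ h => hσ _ _ h)
    hc0 hc_anti.injective hrest hcount hc_anti.antitone
  have hV0 : 0 < V := by
    obtain ⟨t, ht, hkt⟩ := exists_ne_zero_of_sum_ne_zero (Nat.one_le_iff_ne_zero.1 hpos)
    rw [hV]
    exact sum_pos' (fun t _ => by positivity) ⟨t, ht, by positivity⟩
  have h2s : (2 : ℝ) ^ (2 * s) = ((2 : ℝ) ^ s) ^ 2 := by rw [mul_comm, zpow_mul]; norm_cast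
  have hquad : V * ((2 : ℝ) ^ s - U / V) ^ 2 - U ^ 2 / V + ∑ i, (W i) ^ 2
      = (2 : ℝ) ^ (2 * s) * V - (2 : ℝ) ^ (s + 1) * U + ∑ i, (W i) ^ 2 := by
    rw [h2s, zpow_add_one₀ two_ne_zero]
    field_simp
    ring
  refine ⟨hquad ▸ ?_, hquad⟩
  rw [← hQV, h2s, zpow_add_one₀ two_ne_zero]
  linarith [le_sum_mul_sub_sq Q W (zpow_nonneg zero_le_two s) hQW]

/-- Lower bound on the least-squares quantization error for a fixed profile
`(k 0, …, k (n−1))`: with `U = ∑_t 2^(−t) ‖W_{[k_t]}‖₁` and `V = ∑_t k t · 2^(−2t)`,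
for every `s ∈ ℤ`,
`‖2^s Q − W‖² ≥ V (2^s − U/V)² − U²/V + ‖W‖² = 2^(2s) V − 2^(s+1) U + ‖W‖²`. -/
theorem quantization_error_lower_bound {N n : ℕ} (hn : 1 ≤ n) (W : Fin N → ℝ)
    (k : ℕ → ℕ)
    (hsum : ∑ t ∈ Finset.range n, k t ≤ N)
    (hpos : 1 ≤ ∑ t ∈ Finset.range n, k t)
    (σ : Equiv.Perm (Fin N))
    (hσ : ∀ i j : Fin N, i ≤ j → |W (σ j)| ≤ |W (σ i)|)
    (Q : Fin N → ℝ)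
    (hcount : ∀ t < n, (Finset.univ.filter
        (fun i : Fin N => Q i = (2 : ℝ) ^ (-(t : ℤ)) ∨ Q i = -(2 : ℝ) ^ (-(t : ℤ)))).card = k t)
    (hrest : ∀ i : Fin N, Q i ≠ 0 →
        ∃ t < n, Q i = (2 : ℝ) ^ (-(t : ℤ)) ∨ Q i = -(2 : ℝ) ^ (-(t : ℤ)))
    (U V : ℝ)
    (hU : U = ∑ t ∈ Finset.range n, (2 : ℝ) ^ (-(t : ℤ)) *
        groupAbsSum W σ (prefSum k t) (prefSum k t + k t))
    (hV : V = ∑ t ∈ Finset.range n, (k t : ℝ) * (2 : ℝ) ^ (-(2 * (t : ℤ))))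
    (s : ℤ) :
    V * ((2 : ℝ) ^ s - U / V) ^ 2 - U ^ 2 / V + ∑ i, (W i) ^ 2
        ≤ ∑ i, ((2 : ℝ) ^ s * Q i - W i) ^ 2 ∧
      V * ((2 : ℝ) ^ s - U / V) ^ 2 - U ^ 2 / V + ∑ i, (W i) ^ 2
        = (2 : ℝ) ^ (2 * s) * V - (2 : ℝ) ^ (s + 1) * U + ∑ i, (W i) ^ 2 :=
  quantization_error_lower_bound_general W k hpos σ hσ Q hcount hrest U V hU hV s
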